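/- arXiv:2010.05231 — 2 statements merged into one kernel-verified Lean document; each statement's English description precedes it below -/
import Mathlib

section
/- Let g : {1,2,...} → ℝ be a function with g(1) = 1 and g(n) > 0 for all n. Then the family {P_n^{g̃,1}(x)}_n is vertically log-concave if and only if the family {P_n^{g,id}(x)}_n is vertically log-concave; that is, for every fixed m ≥ 1 the sequence n ↦ A_{n,m}^{g̃,1} is log-concave if and only if for every fixed m ≥ 1 the sequence n ↦ A_{n,m}^{g,id} is log-concave. -/
/-!
With `F = ∑ₖ (g k / k) Xᵏ`, the recursion for `h = 1` is multiplication by `F`, so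
`A^{g̃,1}_{n,m} = [Xⁿ] Fᵐ`. Euler's identity `X (F^{m+1})' = (m+1) Fᵐ · X F'`, where
`X F' = ∑ₖ g k Xᵏ`, turns the recursion for `h = id` into the same one up to the factor `m!`:
`A^{g̃,1}_{n,m} = m! · A^{g,id}_{n,m}`. Rescaling the sequence `n ↦ A_{n,m}` by `m! > 0` does not
affect its log-concavity.
-/

/-- The polynomials `P_n^{g,h}` defined by `P_0 = 1` and
`P_n(x) = (x / h(n)) * ∑_{k=1}^n g(k) P_{n-k}(x)` for `n ≥ 1`. -/
noncomputable def HVP (g h : ℕ → ℝ) : ℕ → Polynomial ℝ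
  | 0 => 1
  | (n + 1) =>
      Polynomial.C (h (n + 1))⁻¹ * Polynomial.X *
        ∑ k ∈ (Finset.Icc 1 (n + 1)).attach, Polynomial.C (g k.1) * HVP g h (n + 1 - k.1)
  decreasing_by
    have := (Finset.mem_Icc.mp k.2).1
    omega

/-- `A_{n,m}^{g,h}`, the coefficient of `x^m` in `P_n^{g,h}(x)`.
(It vanishes automatically unless `1 ≤ m ≤ n`, except `A_{0,0} = 1`.) -/
noncomputable def HVA (g h : ℕ → ℝ) (n m : ℕ) : ℝ := (HVP g h n).coeff m

open scoped Nat

lemma HVP_succ (g h : ℕ → ℝ) (n : ℕ) :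
    HVP g h (n + 1) = Polynomial.C (h (n + 1))⁻¹ * Polynomial.X *
      ∑ k ∈ Finset.Icc 1 (n + 1), Polynomial.C (g k) * HVP g h (n + 1 - k) := by
  rw [HVP, Finset.sum_attach _ fun k => Polynomial.C (g k) * HVP g h (n + 1 - k)]

lemma HVA_zero_left (g h : ℕ → ℝ) (m : ℕ) : HVA g h 0 m = if m = 0 then 1 else 0 := by
  simp [HVA, HVP, Polynomial.coeff_one]

lemma HVA_succ_zero (g h : ℕ → ℝ) (n : ℕ) : HVA g h (n + 1) 0 = 0 := by
  simp [HVA, HVP_succ, Polynomial.mul_coeff_zero]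

lemma HVA_succ_succ (g h : ℕ → ℝ) (n m : ℕ) :
    HVA g h (n + 1) (m + 1) =
      (h (n + 1))⁻¹ * ∑ k ∈ Finset.Icc 1 (n + 1), g k * HVA g h (n + 1 - k) m := by
  simp only [HVA, HVP_succ, mul_assoc, Polynomial.coeff_C_mul, Polynomial.coeff_X_mul,
    Polynomial.finsetSum_coeff]

namespace PowerSeries

variable {R : Type*} [CommRing R]

lemma coeff_mk_mul_eq_sum_Icc (f : ℕ → R) (hf : f 0 = 0) (G : R⟦X⟧) (n : ℕ) :
    coeff n (mk f * G) = ∑ k ∈ Finset.Icc 1 n, f k * coeff (n - k) G := by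
  rw [coeff_mul, Finset.Nat.sum_antidiagonal_eq_sum_range_succ_mk, Finset.range_eq_Ico,
    Finset.sum_eq_sum_Ico_succ_bot n.succ_pos]
  simp only [coeff_mk, hf, zero_mul, zero_add, Nat.succ_eq_add_one,
    Finset.Ico_add_one_right_eq_Icc]

lemma coeff_X_mul_derivative (F : R⟦X⟧) (n : ℕ) :
    coeff n (X * d⁄dX R F) = n * coeff n F := by
  cases n with
  | zero => simp
  | succ n => rw [coeff_succ_X_mul, coeff_derivative, mul_comm]; push_cast; rfl

/-- Euler's identity `X (F^{m+1})' = (m+1) F^m (X F')`, read off coefficientwise. -/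
lemma natCast_mul_coeff_pow_succ (F : R⟦X⟧) (n m : ℕ) :
    n * coeff n (F ^ (m + 1)) =
      (m + 1) * ∑ k ∈ Finset.Icc 1 n, k * coeff k F * coeff (n - k) (F ^ m) := by
  have hXdF : X * d⁄dX R F = mk fun k => k * coeff k F := by
    ext k; rw [coeff_X_mul_derivative, coeff_mk]
  rw [← coeff_X_mul_derivative, Derivation.leibniz_pow, add_tsub_cancel_right, smul_eq_mul,
    mul_smul_comm, map_nsmul, nsmul_eq_mul, mul_left_comm, mul_comm (F ^ m), hXdF,
    coeff_mk_mul_eq_sum_Icc _ (by simp)]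
  push_cast; rfl

end PowerSeries

open PowerSeries

lemma HVA_const_one_eq_coeff_pow (f : ℕ → ℝ) (hf : f 0 = 0) (n m : ℕ) :
    HVA f (fun _ => 1) n m = coeff n (mk f ^ m) := by
  induction n using Nat.strong_induction_on generalizing m with
  | _ n ih =>
    match n, m with
    | 0, m => cases m <;> simp [HVA_zero_left, coeff_zero_eq_constantCoeff, hf]
    | n + 1, 0 => simp [HVA_succ_zero, coeff_one]
    | n + 1, m + 1 =>
      rw [HVA_succ_succ, inv_one, one_mul, pow_succ', coeff_mk_mul_eq_sum_Icc f hf]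
      refine Finset.sum_congr rfl fun k hk => ?_
      rw [ih _ (by grind)]

lemma factorial_mul_HVA_natCast (g : ℕ → ℝ) (n m : ℕ) :
    m ! * HVA g (fun k => (k : ℝ)) n m = coeff n (mk (fun k => g k / k) ^ m) := by
  induction n using Nat.strong_induction_on generalizing m with
  | _ n ih =>
    match n, m with
    | 0, m => cases m <;> simp [HVA_zero_left, coeff_zero_eq_constantCoeff]
    | n + 1, 0 => simp [HVA_succ_zero, coeff_one]
    | n + 1, m + 1 =>
      have euler := natCast_mul_coeff_pow_succ (mk fun k => g k / k) (n + 1) m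
      have hsum : ∑ k ∈ Finset.Icc 1 (n + 1), k * coeff k (mk fun k => g k / k) *
            coeff (n + 1 - k) (mk (fun k => g k / k) ^ m) =
          m ! * ∑ k ∈ Finset.Icc 1 (n + 1), g k * HVA g (fun k => (k : ℝ)) (n + 1 - k) m := by
        rw [Finset.mul_sum]
        refine Finset.sum_congr rfl fun k hk => ?_
        have hk0 : (k : ℝ) ≠ 0 := by grind [Nat.cast_ne_zero]
        rw [coeff_mk, mul_div_cancel₀ _ hk0, ← ih _ (by grind)]
        ring
      rw [hsum] at euler
      calc ((m + 1) ! : ℝ) * HVA g (fun k => (k : ℝ)) (n + 1) (m + 1)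
          = ((n + 1 : ℕ) : ℝ)⁻¹ * ((m + 1) * (m ! * ∑ k ∈ Finset.Icc 1 (n + 1),
              g k * HVA g (fun k => (k : ℝ)) (n + 1 - k) m)) := by
            rw [HVA_succ_succ, Nat.factorial_succ]; push_cast; ring
        _ = _ := by rw [← euler, Nat.cast_succ, inv_mul_cancel_left₀ (by positivity)]

lemma HVA_div_natCast_const_one (g : ℕ → ℝ) (n m : ℕ) :
    HVA (fun k => g k / k) (fun _ => 1) n m = m ! * HVA g (fun k => (k : ℝ)) n m := by
  rw [HVA_const_one_eq_coeff_pow _ (by simp), factorial_mul_HVA_natCast]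

lemma mul_sq_ge_mul_mul_mul_iff {c : ℝ} (hc : c ≠ 0) (a b d : ℝ) :
    (c * a) ^ 2 ≥ (c * b) * (c * d) ↔ a ^ 2 ≥ b * d := by
  rw [ge_iff_le, ge_iff_le, show (c * b) * (c * d) = c ^ 2 * (b * d) by ring, mul_pow,
    mul_le_mul_iff_right₀ (by positivity)]

theorem vertical_logConcave_iff_general (g : ℕ → ℝ) :
    (∀ m, 1 ≤ m → ∀ n, 1 ≤ n →
        HVA (fun k => g k / (k : ℝ)) (fun _ => 1) n m ^ 2 ≥
          HVA (fun k => g k / (k : ℝ)) (fun _ => 1) (n - 1) m *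
            HVA (fun k => g k / (k : ℝ)) (fun _ => 1) (n + 1) m)
      ↔ (∀ m, 1 ≤ m → ∀ n, 1 ≤ n →
          HVA g (fun k => (k : ℝ)) n m ^ 2 ≥
            HVA g (fun k => (k : ℝ)) (n - 1) m * HVA g (fun k => (k : ℝ)) (n + 1) m) := by
  simp only [HVA_div_natCast_const_one,
    mul_sq_ge_mul_mul_mul_iff (Nat.cast_ne_zero.mpr (Nat.factorial_ne_zero _))]

/-- `{P_n^{g̃,1}}_n` is vertically log-concave iff `{P_n^{g,id}}_n` is vertically
log-concave: for every fixed `m ≥ 1` the sequence `n ↦ A_{n,m}` is log-concave. -/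
theorem vertical_logConcave_iff (g : ℕ → ℝ) (hg1 : g 1 = 1)
    (hgpos : ∀ k, 1 ≤ k → 0 < g k) :
    (∀ m, 1 ≤ m → ∀ n, 1 ≤ n →
        HVA (fun k => g k / (k : ℝ)) (fun _ => 1) n m ^ 2 ≥
          HVA (fun k => g k / (k : ℝ)) (fun _ => 1) (n - 1) m *
            HVA (fun k => g k / (k : ℝ)) (fun _ => 1) (n + 1) m)
      ↔ (∀ m, 1 ≤ m → ∀ n, 1 ≤ n →
          HVA g (fun k => (k : ℝ)) n m ^ 2 ≥
            HVA g (fun k => (k : ℝ)) (n - 1) m * HVA g (fun k => (k : ℝ)) (n + 1) m) :=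
  vertical_logConcave_iff_general g
end

section
/- For all 1 ≤ m ≤ n one has A_{n,m}^{s,id} = (1/m!) · C(n+m−1, 2m−1) and A_{n,m}^{id,1} = C(n+m−1, 2m−1), where C(·,·) is the binomial coefficient, s(n) = n², and id(n) = n. -/
open Finset Polynomial

theorem Nat.sum_antidiagonal_choose_mul_choose_add {b c : ℕ} (hcb : c ≤ b) (n a : ℕ) :
    ∑ p ∈ antidiagonal n, p.1.choose a * (p.2 + c).choose b = (n + c + 1).choose (a + b + 1) := by
  induction n generalizing a with
  | zero =>
    rcases a with _ | a
    · rcases hcb.eq_or_lt with rfl | hlt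
      · simp
      · simp [Nat.choose_eq_zero_of_lt hlt, Nat.choose_eq_zero_of_lt (Nat.succ_lt_succ hlt)]
    · simp [Nat.choose_eq_zero_of_lt (by omega : c + 1 < a + 1 + b + 1)]
  | succ n ih =>
    rw [Nat.sum_antidiagonal_succ, show n + 1 + c + 1 = n + c + 1 + 1 by ring]
    rcases a with _ | a
    · have h0 := ih 0
      simp only [Nat.choose_zero_right, one_mul] at h0 ⊢
      rw [h0, zero_add, Nat.choose_succ_succ' (n + c + 1) b, add_right_comm n 1 c]
    · simp only [Nat.choose_succ_succ' _ a, add_mul, sum_add_distrib, ih, Nat.choose_zero_succ,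
        zero_mul, zero_add]
      rw [Nat.choose_succ_succ' (n + c + 1), add_right_comm a 1 b]

theorem Finset.Nat.sum_Icc_one_eq_sum_antidiagonal {M : Type*} [AddCommMonoid M]
    (f : ℕ → ℕ → M) (hf : ∀ j, f 0 j = 0) (n : ℕ) :
    ∑ k ∈ Icc 1 n, f k (n - k) = ∑ p ∈ antidiagonal n, f p.1 p.2 := by
  rw [Nat.sum_antidiagonal_eq_sum_range_succ, range_eq_Ico, sum_eq_sum_Ico_succ_bot n.succ_pos,
    hf, zero_add]
  rfl

theorem HVA_zero_right (g h : ℕ → ℝ) (n : ℕ) : HVA g h n 0 = if n = 0 then 1 else 0 := by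
  cases n <;> simp [HVA, HVP, mul_assoc]

theorem HVA_succ_right {g : ℕ → ℝ} (hg : g 0 = 0) (h : ℕ → ℝ) (n m : ℕ) :
    HVA g h n (m + 1) = (h n)⁻¹ * ∑ p ∈ antidiagonal n, g p.1 * HVA g h p.2 m := by
  cases n with
  | zero => simp [HVA, HVP, hg, coeff_one]
  | succ n =>
    rw [HVA, HVP, sum_attach (Icc 1 (n + 1)) fun k => C (g k) * HVP g h (n + 1 - k), mul_assoc,
      coeff_C_mul, coeff_X_mul, finsetSum_coeff]
    simp only [coeff_C_mul]
    exact congrArg _ (Nat.sum_Icc_one_eq_sum_antidiagonal (fun k j => g k * HVA g h j m)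
      (by simp [hg]) (n + 1))

theorem HVA_one_right {g : ℕ → ℝ} (hg : g 0 = 0) (h : ℕ → ℝ) (n : ℕ) :
    HVA g h n 1 = (h n)⁻¹ * g n := by
  rw [HVA_succ_right hg, sum_eq_single_of_mem (n, 0) (by simp)]
  · simp [HVA_zero_right]
  · rintro ⟨i, j⟩ hij hne
    have hj : j ≠ 0 := by rintro rfl; simp_all
    simp [HVA_zero_right, hj]

theorem Nat.sq_eq_two_mul_choose_two_add (i : ℕ) : i ^ 2 = 2 * i.choose 2 + i := by
  induction i with
  | zero => rfl
  | succ i ih => rw [Nat.choose_succ_succ', Nat.choose_one_right]; linarith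

theorem sum_antidiagonal_mul_choose (n m : ℕ) :
    ∑ p ∈ antidiagonal n, p.1 * (p.2 + m).choose (2 * m + 1) = (n + m + 1).choose (2 * m + 3) := by
  have h := Nat.sum_antidiagonal_choose_mul_choose_add (by omega : m ≤ 2 * m + 1) n 1
  simp only [Nat.choose_one_right] at h
  rw [h]
  ring_nf

theorem sum_antidiagonal_sq_mul_choose (n m : ℕ) :
    (m + 2) * ∑ p ∈ antidiagonal n, p.1 ^ 2 * (p.2 + m).choose (2 * m + 1)
      = n * (n + m + 1).choose (2 * m + 3) := by
  have hsum : ∑ p ∈ antidiagonal n, p.1 ^ 2 * (p.2 + m).choose (2 * m + 1)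
      = 2 * (n + m + 1).choose (2 * m + 4) + (n + m + 1).choose (2 * m + 3) := by
    have h2 := Nat.sum_antidiagonal_choose_mul_choose_add (by omega : m ≤ 2 * m + 1) n 2
    simp only [Nat.sq_eq_two_mul_choose_two_add, add_mul, sum_add_distrib, mul_assoc, ← mul_sum,
      sum_antidiagonal_mul_choose, h2]
    ring_nf
  rcases lt_or_ge n (m + 2) with hn | hn
  · simp [Nat.choose_eq_zero_of_lt (by omega : n + m + 1 < 2 * m + 3),
      Nat.choose_eq_zero_of_lt (by omega : n + m + 1 < 2 * m + 4), hsum]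
  · obtain ⟨k, rfl⟩ : ∃ k, n = k + m + 2 := ⟨n - (m + 2), by omega⟩
    have hstep := Nat.choose_succ_right_eq (k + m + 2 + m + 1) (2 * m + 3)
    rw [show k + m + 2 + m + 1 - (2 * m + 3) = k by omega] at hstep
    rw [hsum]
    nlinarith [hstep]

theorem HVA_id_one (n m : ℕ) :
    HVA (fun k => (k : ℝ)) (fun _ => 1) n (m + 1) = (n + m).choose (2 * m + 1) := by
  induction m generalizing n with
  | zero => simp [HVA_one_right]
  | succ m ih =>
    rw [HVA_succ_right Nat.cast_zero]
    simp only [ih, inv_one, one_mul]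
    exact_mod_cast (sum_antidiagonal_mul_choose n m).trans (by ring_nf)

theorem HVA_sq_id (n m : ℕ) :
    HVA (fun k => (k : ℝ) ^ 2) (fun k => (k : ℝ)) n (m + 1)
      = (n + m).choose (2 * m + 1) / (m + 1).factorial := by
  induction m generalizing n with
  | zero =>
    rw [HVA_one_right (by simp)]
    field_simp
    simp
  | succ m ih =>
    rw [HVA_succ_right (by simp)]
    simp only [ih]
    rcases eq_or_ne n 0 with rfl | hn
    · simp [Nat.choose_eq_zero_of_lt (by omega : m + 1 < 2 * (m + 1) + 1)]
    set S := ∑ p ∈ antidiagonal n, p.1 ^ 2 * (p.2 + m).choose (2 * m + 1)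
    have hsum : ∑ p ∈ antidiagonal n,
          (p.1 : ℝ) ^ 2 * ((p.2 + m).choose (2 * m + 1) / (m + 1).factorial)
        = S / (m + 1).factorial := by
      simp [S, sum_div, mul_div_assoc]
    have hkey : ((m : ℝ) + 2) * S = n * (n + m + 1).choose (2 * m + 3) := by
      exact_mod_cast sum_antidiagonal_sq_mul_choose n m
    rw [hsum, Nat.factorial_succ (m + 1), show n + (m + 1) = n + m + 1 by ring,
      show 2 * (m + 1) + 1 = 2 * m + 3 by ring]
    push_cast
    field_simp
    linear_combination hkey

theorem A_s_id_and_A_id_one_general (n m : ℕ) (hm : 1 ≤ m) :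
    HVA (fun k => (k : ℝ) ^ 2) (fun k => (k : ℝ)) n m
      = (1 / (Nat.factorial m : ℝ)) * (Nat.choose (n + m - 1) (2 * m - 1) : ℝ) ∧
    HVA (fun k => (k : ℝ)) (fun _ => 1) n m
      = (Nat.choose (n + m - 1) (2 * m - 1) : ℝ) := by
  obtain ⟨k, rfl⟩ := Nat.exists_eq_add_of_le' hm
  rw [show n + (k + 1) - 1 = n + k by omega, show 2 * (k + 1) - 1 = 2 * k + 1 by omega,
    HVA_sq_id, HVA_id_one, one_div_mul_eq_div]
  exact ⟨rfl, rfl⟩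

/-- `A_{n,m}^{s,id} = (1/m!) · C(n+m-1, 2m-1)` and `A_{n,m}^{id,1} = C(n+m-1, 2m-1)`
for `1 ≤ m ≤ n`, where `s(n) = n²`. -/
theorem A_s_id_and_A_id_one (n m : ℕ) (hm : 1 ≤ m) (hmn : m ≤ n) :
    HVA (fun k => (k : ℝ) ^ 2) (fun k => (k : ℝ)) n m
      = (1 / (Nat.factorial m : ℝ)) * (Nat.choose (n + m - 1) (2 * m - 1) : ℝ) ∧
    HVA (fun k => (k : ℝ)) (fun _ => 1) n m
      = (Nat.choose (n + m - 1) (2 * m - 1) : ℝ) :=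
  A_s_id_and_A_id_one_general n m hm
end
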